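/- arXiv:1611.07735 — 2 statements merged into one kernel-verified Lean document; each statement's English description precedes it below -/
import Mathlib

section
/- Let R ⊆ S be an extension of commutative rings. If there exists a surjective R-linear map from R^n onto S^n (where S^n is viewed as an R-module via restriction of scalars) for some natural number n ≥ 1, then R = S. -/
/-!
Let `g : Sⁿ → Sⁿ` be the `S`-linear map sending `eᵢ` to `f eᵢ`. Then `f` is `g` precomposed with
the coordinatewise map `Rⁿ → Sⁿ`, so `g` is a surjective endomorphism of a finitely generated module over a
commutative ring, hence bijective (Orzech). Therefore `Rⁿ → Sⁿ` is itself
surjective, and so is `R → S`.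
-/

open Function

theorem LinearMap.eq_linearCombination_algebraMap_comp {ι R S M : Type*} [Fintype ι]
    [DecidableEq ι] [CommSemiring R] [Semiring S] [Algebra R S] [AddCommMonoid M] [Module R M]
    [Module S M] [IsScalarTower R S M] (f : (ι → R) →ₗ[R] M) (x : ι → R) :
    f x = Fintype.linearCombination S (fun i => f (Pi.single i 1)) (algebraMap R S ∘ x) := by
  rw [f.pi_apply_eq_sum_univ, Fintype.linearCombination_apply]
  refine Finset.sum_congr rfl fun i _ => ?_
  rw [Function.comp_apply, algebraMap_smul]
  congr
  ext j
  simp [Pi.single_apply, eq_comm]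

theorem surjective_algebraMap_comp_of_surjective {ι R S : Type*} [Finite ι] [CommRing R]
    [CommRing S] [Algebra R S] (f : (ι → R) →ₗ[R] (ι → S)) (hf : Surjective f) :
    Surjective (algebraMap R S ∘ · : (ι → R) → ι → S) := by
  classical
  have := Fintype.ofFinite ι
  set g := Fintype.linearCombination S (fun i => f (Pi.single i 1))
  have hfg : ⇑f = g ∘ (algebraMap R S ∘ ·) := funext f.eq_linearCombination_algebraMap_comp
  have hg_surj : Surjective g := by
    rw [hfg] at hf
    exact hf.of_comp
  have hg_inj : Injective g := OrzechProperty.injective_of_surjective_endomorphism g hg_surj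
  intro y
  obtain ⟨x, hx⟩ := hf (g y)
  exact ⟨x, hg_inj (by rw [← hx, hfg, comp_apply])⟩

theorem stmt_1_general {R S : Type*} [CommRing R] [CommRing S] [Algebra R S]
    (n : ℕ) (hn : 1 ≤ n) (f : (Fin n → R) →ₗ[R] (Fin n → S))
    (hf : Function.Surjective f) :
    Function.Surjective (algebraMap R S) :=
  have : Nonempty (Fin n) := ⟨⟨0, hn⟩⟩
  surjective_comp_left_iff.mp (surjective_algebraMap_comp_of_surjective f hf)

/-- Let `R ⊆ S` be an extension of commutative rings.  If there is a
surjective `R`-linear map `R^n → S^n` (with `S^n` viewed as an `R`-module by restriction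
of scalars) for some `n ≥ 1`, then `R = S`, i.e. the inclusion `R → S` is surjective. -/
theorem stmt_1 {R S : Type*} [CommRing R] [CommRing S] [Algebra R S]
    (hinj : Function.Injective (algebraMap R S))
    (n : ℕ) (hn : 1 ≤ n) (f : (Fin n → R) →ₗ[R] (Fin n → S))
    (hf : Function.Surjective f) :
    Function.Surjective (algebraMap R S) :=
  stmt_1_general n hn f hf
end

section
/- Let R ⊆ S ⊆ T be extensions of commutative rings such that T is a free module of the same finite rank n over both S and over R. Then R = S. -/
/-!
The `R`-basis `bR` of `T` also spans `T` over `S`, and a spanning family of `n` vectors in a free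
module of rank `n` over a commutative ring is linearly independent (Orzech property), so `bR` is an
`S`-basis as well. Expanding `s • bR i` in `bR` with coefficients in `R` and comparing
`S`-coordinates then exhibits `s` as the image of an element of `R`.
-/

theorem Module.Basis.surjective_algebraMap_of_linearIndependent {R S T ι : Type*}
    [CommRing R] [CommRing S] [AddCommGroup T] [Algebra R S] [Module S T] [Module R T]
    [IsScalarTower R S T] [Nonempty ι] (b : Module.Basis ι R T) (hb : LinearIndependent S b) :
    Function.Surjective (algebraMap R S) := by
  intro s
  obtain ⟨i⟩ := ‹Nonempty ι›
  have h : Finsupp.linearCombination S b ((b.repr (s • b i)).mapRange (algebraMap R S) (map_zero _))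
      = Finsupp.linearCombination S b (Finsupp.single i s) := by
    rw [Finsupp.linearCombination_single, Finsupp.linearCombination_apply,
      Finsupp.sum_mapRange_index fun _ => zero_smul S (b _)]
    simpa only [algebraMap_smul, Finsupp.linearCombination_apply]
      using b.linearCombination_repr (s • b i)
  exact ⟨_, by simpa using DFunLike.congr_fun (hb h) i⟩

theorem stmt_2_general {R S T : Type*} [CommRing R] [CommRing S] [CommRing T]
    [Algebra R S] [Algebra S T] [Algebra R T] [IsScalarTower R S T]
    (hST : Function.Injective (algebraMap S T))
    (n : ℕ) (bS : Module.Basis (Fin n) S T) (bR : Module.Basis (Fin n) R T) :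
    Function.Surjective (algebraMap R S) := by
  cases subsingleton_or_nontrivial S with
  | inl _ => exact fun s => ⟨0, Subsingleton.elim _ _⟩
  | inr _ =>
    have : Nontrivial T := hST.nontrivial
    have : Nonempty (Fin n) := bR.index_nonempty
    have hspan : Submodule.span S (Set.range bR) = ⊤ :=
      Submodule.span_eq_top_of_span_eq_top R S _ bR.span_eq
    have hindep : LinearIndependent S bR :=
      linearIndependent_of_top_le_span_of_card_eq_finrank hspan.ge
        (Module.finrank_eq_card_basis bS).symm
    exact bR.surjective_algebraMap_of_linearIndependent hindep

/-- Let `R ⊆ S ⊆ T` be extensions of commutative rings such that `T` is a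
free module of the same finite rank `n` over both `S` and `R`. Then `R = S`, i.e. the
inclusion `R → S` is surjective. -/
theorem stmt_2 {R S T : Type*} [CommRing R] [CommRing S] [CommRing T]
    [Algebra R S] [Algebra S T] [Algebra R T] [IsScalarTower R S T]
    (hRS : Function.Injective (algebraMap R S))
    (hST : Function.Injective (algebraMap S T))
    (n : ℕ) (bS : Module.Basis (Fin n) S T) (bR : Module.Basis (Fin n) R T) :
    Function.Surjective (algebraMap R S) :=
  stmt_2_general hST n bS bR
end
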